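/- Let G be a finite connected simple graph with n vertices and m edges, with arcs arranged so that e_{m+k} = e_k^{-1} for k = 1,…,m, and let w be a quaternionic weight on its arcs. Then the following identity of Study determinants holds: Sdet_t(I_{2m} − t(B_w − J_w)) = Sdet_t(I_n − tW̃ + t²D̃) · ∏_{i=1}^m (1 − w(e_i)w(e_i^{-1})t²)(1 − w(e_i)w(e_i^{-1})t²)^*. -/

import Mathlib

open Quaternion PowerSeries

noncomputable section

/-- The simplex part of a quaternion: `x = x^S + j x^P` with `x^S, x^P ∈ ℂ`. -/
def qS (x : ℍ[ℝ]) : ℂ := ⟨x.re, x.imI⟩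

/-- The perplex part of a quaternion. -/
def qP (x : ℍ[ℝ]) : ℂ := ⟨x.imJ, -x.imK⟩

/-- The embedding of `ℂ` into the quaternions as the real subalgebra spanned by `1, i`. -/
def cq : ℂ →+* ℍ[ℝ] where
  toFun c := ⟨c.re, c.im, 0, 0⟩
  map_one' := by ext <;> simp
  map_mul' a b := by
    ext <;> simp <;> first | (erw [Quaternion.re_mul]; try simp) | (erw [Quaternion.imI_mul]; try simp) | (erw [Quaternion.imJ_mul]; try simp) | (erw [Quaternion.imK_mul]; try simp)
  map_zero' := by ext <;> simp
  map_add' a b := by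
    ext <;> simp <;> first | (erw [Quaternion.re_add]; try simp) | (erw [Quaternion.imI_add]; try simp) | (erw [Quaternion.imJ_add]; try simp) | (erw [Quaternion.imK_add]; try simp)

/-- Coefficientwise quaternion conjugation of a formal power series. -/
def pStar (α : PowerSeries ℍ[ℝ]) : PowerSeries ℍ[ℝ] :=
  PowerSeries.mk fun k => star (PowerSeries.coeff k α)

/-- Coefficientwise simplex part of a quaternionic power series. -/
def pS (α : PowerSeries ℍ[ℝ]) : PowerSeries ℂ :=
  PowerSeries.mk fun k => qS (PowerSeries.coeff k α)

/-- Coefficientwise perplex part of a quaternionic power series. -/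
def pP (α : PowerSeries ℍ[ℝ]) : PowerSeries ℂ :=
  PowerSeries.mk fun k => qP (PowerSeries.coeff k α)

/-- Coefficientwise complex conjugation of a complex power series. -/
def pConj (β : PowerSeries ℂ) : PowerSeries ℂ := PowerSeries.map (starRingEnd ℂ) β

/-- `ψ_t(M) = [[M^S, −conj(M^P)], [M^P, conj(M^S)]]`. -/
def psiT {ι κ : Type*} (M : Matrix ι κ (PowerSeries ℍ[ℝ])) :
    Matrix (ι ⊕ ι) (κ ⊕ κ) (PowerSeries ℂ) :=
  Matrix.fromBlocks (M.map pS) (-(M.map fun a => pConj (pP a)))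
    (M.map pP) (M.map fun a => pConj (pS a))

/-- The Study determinant `Sdet_t(M) = det(ψ_t(M))`. -/
def SdetT {ι : Type*} [Fintype ι] [DecidableEq ι] (M : Matrix ι ι (PowerSeries ℍ[ℝ])) :
    PowerSeries ℂ :=
  (psiT M).det

variable {V : Type*} [DecidableEq V]

/-- The matrix `B_w`. -/
def Bw (G : SimpleGraph V) (w : G.Dart → ℍ[ℝ]) : Matrix G.Dart G.Dart ℍ[ℝ] :=
  fun e f => if e.snd = f.fst then w e else 0

/-- The matrix `J_w`. -/
def Jw (G : SimpleGraph V) (w : G.Dart → ℍ[ℝ]) : Matrix G.Dart G.Dart ℍ[ℝ] :=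
  fun e f => if f = e.symm then w e else 0

/-- The matrix `W̃`. -/
def Wtil (G : SimpleGraph V) [DecidableRel G.Adj] (w : G.Dart → ℍ[ℝ]) :
    Matrix V V (PowerSeries ℍ[ℝ]) := fun u v =>
  if h : G.Adj u v then
    Ring.inverse (1 - (PowerSeries.C (R := ℍ[ℝ]))
        (w ⟨(u, v), h⟩ * w (SimpleGraph.Dart.symm ⟨(u, v), h⟩)) * PowerSeries.X ^ 2) *
      (PowerSeries.C (R := ℍ[ℝ])) (w ⟨(u, v), h⟩)
  else 0

open scoped Classical in
/-- The matrix `D̃`. -/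
def Dtil (G : SimpleGraph V) [Fintype V] [DecidableRel G.Adj] (w : G.Dart → ℍ[ℝ]) :
    Matrix V V (PowerSeries ℍ[ℝ]) := fun u v =>
  if u = v then
    ∑ e ∈ Finset.univ.filter (fun e : G.Dart => e.fst = u),
      Ring.inverse (1 - (PowerSeries.C (R := ℍ[ℝ])) (w e * w e.symm) * PowerSeries.X ^ 2) *
        (PowerSeries.C (R := ℍ[ℝ])) (w e * w e.symm)
  else 0

lemma qS_add (x y : ℍ[ℝ]) : qS (x + y) = qS x + qS y := by
  simp [qS, Complex.ext_iff]
lemma qP_add (x y : ℍ[ℝ]) : qP (x + y) = qP x + qP y := by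
  simp [qP, Complex.ext_iff]; ring
lemma qS_zero : qS 0 = 0 := by simp [qS, Complex.ext_iff]
lemma qP_zero : qP 0 = 0 := by simp [qP, Complex.ext_iff]
lemma qS_one : qS 1 = 1 := by simp [qS, Complex.ext_iff]
lemma qP_one : qP 1 = 0 := by simp [qP, Complex.ext_iff]

def qSh : ℍ[ℝ] →+ ℂ := ⟨⟨qS, qS_zero⟩, qS_add⟩
def qPh : ℍ[ℝ] →+ ℂ := ⟨⟨qP, qP_zero⟩, qP_add⟩

lemma qS_mul (x y : ℍ[ℝ]) :
    qS (x * y) = qS x * qS y - (starRingEnd ℂ) (qP x) * qP y := by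
  simp [qS, qP, Complex.ext_iff, Complex.mul_re, Complex.mul_im,
    Quaternion.re_mul, Quaternion.imI_mul]; constructor <;> ring

lemma qP_mul (x y : ℍ[ℝ]) :
    qP (x * y) = (starRingEnd ℂ) (qS x) * qP y + qP x * qS y := by
  simp [qS, qP, Complex.ext_iff, Complex.mul_re, Complex.mul_im,
    Quaternion.imJ_mul, Quaternion.imK_mul]; constructor <;> ring

lemma coeff_pS (α : PowerSeries ℍ[ℝ]) (k : ℕ) :
    PowerSeries.coeff k (pS α) = qS (PowerSeries.coeff k α) := coeff_mk _ _
lemma coeff_pP (α : PowerSeries ℍ[ℝ]) (k : ℕ) :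
    PowerSeries.coeff k (pP α) = qP (PowerSeries.coeff k α) := coeff_mk _ _
lemma coeff_pConj (β : PowerSeries ℂ) (k : ℕ) :
    PowerSeries.coeff k (pConj β) = (starRingEnd ℂ) (PowerSeries.coeff k β) :=
  PowerSeries.coeff_map _ _ _

lemma pS_add (α β : PowerSeries ℍ[ℝ]) : pS (α + β) = pS α + pS β := by
  ext k; simp [coeff_pS, qS_add]
lemma pP_add (α β : PowerSeries ℍ[ℝ]) : pP (α + β) = pP α + pP β := by
  ext k; simp [coeff_pP, qP_add]
lemma pS_zero : pS 0 = 0 := by ext k; simp [coeff_pS, qS_zero]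
lemma pP_zero : pP 0 = 0 := by ext k; simp [coeff_pP, qP_zero]
lemma pS_one : pS 1 = 1 := by
  ext k; simp [coeff_pS, PowerSeries.coeff_one]
  split <;> simp [qS_one, qS_zero]
lemma pP_one : pP 1 = 0 := by
  ext k; simp [coeff_pP, PowerSeries.coeff_one]
  split <;> simp [qP_one, qP_zero]
lemma pS_neg (α : PowerSeries ℍ[ℝ]) : pS (-α) = -pS α := by
  have := pS_add α (-α); simp [pS_zero] at this; linear_combination -this
lemma pP_neg (α : PowerSeries ℍ[ℝ]) : pP (-α) = -pP α := by
  have := pP_add α (-α); simp [pP_zero] at this; linear_combination -this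
lemma pS_sub (α β : PowerSeries ℍ[ℝ]) : pS (α - β) = pS α - pS β := by
  rw [sub_eq_add_neg, pS_add, pS_neg, sub_eq_add_neg]
lemma pP_sub (α β : PowerSeries ℍ[ℝ]) : pP (α - β) = pP α - pP β := by
  rw [sub_eq_add_neg, pP_add, pP_neg, sub_eq_add_neg]

lemma pS_mul (α β : PowerSeries ℍ[ℝ]) :
    pS (α * β) = pS α * pS β - pConj (pP α) * pP β := by
  ext k
  rw [coeff_pS, PowerSeries.coeff_mul, map_sub, PowerSeries.coeff_mul, PowerSeries.coeff_mul,
    ← Finset.sum_sub_distrib]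
  rw [show qS = qSh from rfl, map_sum]
  refine Finset.sum_congr rfl fun p _ => ?_
  show qS _ = _
  rw [qS_mul]
  simp [coeff_pS, coeff_pP, coeff_pConj]

lemma pP_mul (α β : PowerSeries ℍ[ℝ]) :
    pP (α * β) = pConj (pS α) * pP β + pP α * pS β := by
  ext k
  rw [coeff_pP, PowerSeries.coeff_mul, map_add, PowerSeries.coeff_mul, PowerSeries.coeff_mul,
    ← Finset.sum_add_distrib]
  rw [show qP = qPh from rfl, map_sum]
  refine Finset.sum_congr rfl fun p _ => ?_
  show qP _ = _
  rw [qP_mul]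
  simp [coeff_pS, coeff_pP, coeff_pConj]
def pSh : PowerSeries ℍ[ℝ] →+ PowerSeries ℂ := ⟨⟨pS, pS_zero⟩, pS_add⟩
def pPh : PowerSeries ℍ[ℝ] →+ PowerSeries ℂ := ⟨⟨pP, pP_zero⟩, pP_add⟩

lemma pS_sum {σ : Type*} (s : Finset σ) (f : σ → PowerSeries ℍ[ℝ]) :
    pS (∑ i ∈ s, f i) = ∑ i ∈ s, pS (f i) := map_sum pSh f s
lemma pP_sum {σ : Type*} (s : Finset σ) (f : σ → PowerSeries ℍ[ℝ]) :
    pP (∑ i ∈ s, f i) = ∑ i ∈ s, pP (f i) := map_sum pPh f s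
lemma pConj_sum {σ : Type*} (s : Finset σ) (f : σ → PowerSeries ℂ) :
    pConj (∑ i ∈ s, f i) = ∑ i ∈ s, pConj (f i) := map_sum (PowerSeries.map (starRingEnd ℂ)) f s

lemma pConj_pConj (β : PowerSeries ℂ) : pConj (pConj β) = β := by
  ext k; simp [coeff_pConj]
lemma pConj_add (β γ : PowerSeries ℂ) : pConj (β + γ) = pConj β + pConj γ := map_add _ _ _
lemma pConj_mul (β γ : PowerSeries ℂ) : pConj (β * γ) = pConj β * pConj γ := map_mul _ _ _
lemma pConj_one : pConj 1 = 1 := map_one _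
lemma pConj_zero : pConj 0 = 0 := map_zero _
lemma pConj_neg (β : PowerSeries ℂ) : pConj (-β) = -pConj β := map_neg _ _
lemma pConj_sub (β γ : PowerSeries ℂ) : pConj (β - γ) = pConj β - pConj γ := map_sub _ _ _

lemma psiT_one {ι : Type*} [DecidableEq ι] :
    psiT (1 : Matrix ι ι (PowerSeries ℍ[ℝ])) = 1 := by
  apply Matrix.ext; rintro (i|i) (j|j) <;> by_cases h : i = j <;>
    simp [psiT, Matrix.one_apply, h, pS_one, pS_zero, pP_one, pP_zero, pConj_one, pConj_zero]

lemma psiT_add {ι κ : Type*} (M N : Matrix ι κ (PowerSeries ℍ[ℝ])) :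
    psiT (M + N) = psiT M + psiT N := by
  apply Matrix.ext; rintro (i|i) (j|j) <;>
    simp [psiT, pS_add, pP_add, pConj_add] <;> ring
lemma psiT_neg {ι κ : Type*} (M : Matrix ι κ (PowerSeries ℍ[ℝ])) :
    psiT (-M) = -psiT M := by
  apply Matrix.ext; rintro (i|i) (j|j) <;>
    simp [psiT, pS_neg, pP_neg, pConj_neg]
lemma psiT_sub {ι κ : Type*} (M N : Matrix ι κ (PowerSeries ℍ[ℝ])) :
    psiT (M - N) = psiT M - psiT N := by
  rw [sub_eq_add_neg, psiT_add, psiT_neg, sub_eq_add_neg]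

lemma psiT_mul {ι κ lam : Type*} [Fintype κ] (M : Matrix ι κ (PowerSeries ℍ[ℝ]))
    (N : Matrix κ lam (PowerSeries ℍ[ℝ])) :
    psiT (M * N) = psiT M * psiT N := by
  unfold psiT
  rw [Matrix.fromBlocks_multiply]
  apply Matrix.ext; rintro (i|i) (j|j)
  · simp only [Matrix.fromBlocks_apply₁₁, Matrix.map_apply, Matrix.mul_apply, Matrix.add_apply,
      Matrix.neg_apply, pS_sum, ← Finset.sum_add_distrib]
    exact Finset.sum_congr rfl fun k _ => by rw [pS_mul]; ring
  · simp only [Matrix.fromBlocks_apply₁₂, Matrix.map_apply, Matrix.mul_apply, Matrix.add_apply,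
      Matrix.neg_apply, pP_sum, pConj_sum, ← Finset.sum_add_distrib, ← Finset.sum_neg_distrib]
    exact Finset.sum_congr rfl fun k _ => by
      rw [pP_mul, pConj_add, pConj_mul, pConj_mul, pConj_pConj]; ring
  · simp only [Matrix.fromBlocks_apply₂₁, Matrix.map_apply, Matrix.mul_apply, Matrix.add_apply,
      Matrix.neg_apply, pP_sum, ← Finset.sum_add_distrib]
    exact Finset.sum_congr rfl fun k _ => by rw [pP_mul]; ring
  · simp only [Matrix.fromBlocks_apply₂₂, Matrix.map_apply, Matrix.mul_apply, Matrix.add_apply,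
      Matrix.neg_apply, pS_sum, pConj_sum, ← Finset.sum_add_distrib]
    exact Finset.sum_congr rfl fun k _ => by
      rw [pS_mul, pConj_sub, pConj_mul, pConj_mul, pConj_pConj]; ring
lemma SdetT_mul {ι : Type*} [Fintype ι] [DecidableEq ι]
    (M N : Matrix ι ι (PowerSeries ℍ[ℝ])) : SdetT (M * N) = SdetT M * SdetT N := by
  unfold SdetT; rw [psiT_mul, Matrix.det_mul]

lemma SdetT_one {ι : Type*} [Fintype ι] [DecidableEq ι] :
    SdetT (1 : Matrix ι ι (PowerSeries ℍ[ℝ])) = 1 := by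
  unfold SdetT; rw [psiT_one, Matrix.det_one]

lemma SdetT_one_sub_mul_comm {ι κ : Type*} [Fintype ι] [DecidableEq ι] [Fintype κ] [DecidableEq κ]
    (M : Matrix ι κ (PowerSeries ℍ[ℝ])) (N : Matrix κ ι (PowerSeries ℍ[ℝ])) :
    SdetT (1 - M * N) = SdetT (1 - N * M) := by
  unfold SdetT
  rw [psiT_sub, psiT_one, psiT_mul, psiT_sub, psiT_one, psiT_mul,
    Matrix.det_one_sub_mul_comm]

lemma SdetT_submatrix {ι κ : Type*} [Fintype ι] [DecidableEq ι] [Fintype κ] [DecidableEq κ]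
    (e : κ ≃ ι) (M : Matrix ι ι (PowerSeries ℍ[ℝ])) :
    SdetT (M.submatrix e e) = SdetT M := by
  unfold SdetT
  have h : psiT (M.submatrix e e)
      = (psiT M).submatrix (Equiv.sumCongr e e) (Equiv.sumCongr e e) := by
    apply Matrix.ext; rintro (i|i) (j|j) <;> rfl
  rw [h, Matrix.det_submatrix_equiv_self]

lemma psiT_fromBlocks {ι κ μ ν : Type*} (P : Matrix ι μ (PowerSeries ℍ[ℝ]))
    (Q : Matrix ι ν (PowerSeries ℍ[ℝ])) (Z : Matrix κ μ (PowerSeries ℍ[ℝ]))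
    (W : Matrix κ ν (PowerSeries ℍ[ℝ])) :
    psiT (Matrix.fromBlocks P Q Z W) =
      (Matrix.fromBlocks (psiT P) (psiT Q) (psiT Z) (psiT W)).submatrix
        (Equiv.sumSumSumComm ι κ ι κ) (Equiv.sumSumSumComm μ ν μ ν) := by
  apply Matrix.ext; rintro ((i|i)|(i|i)) ((j|j)|(j|j)) <;> rfl

lemma SdetT_fromBlocks_zero₂₁ {ι κ : Type*} [Fintype ι] [DecidableEq ι] [Fintype κ]
    [DecidableEq κ] (P : Matrix ι ι (PowerSeries ℍ[ℝ])) (Q : Matrix ι κ (PowerSeries ℍ[ℝ]))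
    (W : Matrix κ κ (PowerSeries ℍ[ℝ])) :
    SdetT (Matrix.fromBlocks P Q 0 W) = SdetT P * SdetT W := by
  unfold SdetT
  rw [psiT_fromBlocks, Matrix.det_submatrix_equiv_self]
  have hz : psiT (0 : Matrix κ ι (PowerSeries ℍ[ℝ])) = 0 := by
    apply Matrix.ext; rintro (i|i) (j|j) <;>
      simp [psiT, pS_zero, pP_zero, pConj_zero]
  rw [hz, Matrix.det_fromBlocks_zero₂₁]

lemma SdetT_fromBlocks_zero₁₂ {ι κ : Type*} [Fintype ι] [DecidableEq ι] [Fintype κ]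
    [DecidableEq κ] (P : Matrix ι ι (PowerSeries ℍ[ℝ])) (Z : Matrix κ ι (PowerSeries ℍ[ℝ]))
    (W : Matrix κ κ (PowerSeries ℍ[ℝ])) :
    SdetT (Matrix.fromBlocks P 0 Z W) = SdetT P * SdetT W := by
  unfold SdetT
  rw [psiT_fromBlocks, Matrix.det_submatrix_equiv_self]
  have hz : psiT (0 : Matrix ι κ (PowerSeries ℍ[ℝ])) = 0 := by
    apply Matrix.ext; rintro (i|i) (j|j) <;>
      simp [psiT, pS_zero, pP_zero, pConj_zero]
  rw [hz, Matrix.det_fromBlocks_zero₁₂]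

def detPsi1 (α : PowerSeries ℍ[ℝ]) : PowerSeries ℂ :=
  pS α * pConj (pS α) + pP α * pConj (pP α)

lemma SdetT_diagonal_fin_one (d : Fin 1 → PowerSeries ℍ[ℝ]) :
    SdetT (Matrix.diagonal d) = detPsi1 (d 0) := by
  unfold SdetT
  rw [← Matrix.det_submatrix_equiv_self (finSumFinEquiv : Fin 1 ⊕ Fin 1 ≃ Fin 2).symm,
    Matrix.det_fin_two]
  have h0 : (finSumFinEquiv : Fin 1 ⊕ Fin 1 ≃ Fin 2).symm 0 = Sum.inl 0 := rfl
  have h1 : (finSumFinEquiv : Fin 1 ⊕ Fin 1 ≃ Fin 2).symm 1 = Sum.inr 0 := rfl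
  simp only [Matrix.submatrix_apply, h0, h1]
  show pS _ * pConj (pS _) - (-(pConj (pP _))) * pP _ = _
  simp only [Matrix.diagonal_apply_eq, detPsi1]
  ring

lemma SdetT_diagonal {m : ℕ} (d : Fin m → PowerSeries ℍ[ℝ]) :
    SdetT (Matrix.diagonal d) = ∏ i, detPsi1 (d i) := by
  induction m with
  | zero => simp [SdetT, Matrix.det_isEmpty]
  | succ m ih =>
    set e : Fin 1 ⊕ Fin m ≃ Fin (1 + m) := finSumFinEquiv with he
    set e' : Fin 1 ⊕ Fin m ≃ Fin (m + 1) := e.trans (finCongr (Nat.add_comm 1 m)) with he'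
    have hsub : (Matrix.diagonal d).submatrix e' e' =
        Matrix.fromBlocks (Matrix.diagonal fun i => d (e' (Sum.inl i))) 0 0
          (Matrix.diagonal fun i => d (e' (Sum.inr i))) := by
      apply Matrix.ext; rintro (i|i) (j|j) <;>
        simp [Matrix.diagonal_apply, e'.injective.eq_iff] <;> tauto
    rw [← SdetT_submatrix e' (Matrix.diagonal d), hsub, SdetT_fromBlocks_zero₂₁,
      SdetT_diagonal_fin_one, ih]
    rw [← Equiv.prod_comp e' (fun i => detPsi1 (d i)), Fintype.prod_sum_type]
    simp
def invSer (q : ℍ[ℝ]) : PowerSeries ℍ[ℝ] :=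
  PowerSeries.mk fun n => if 2 ∣ n then q ^ (n / 2) else 0

lemma one_sub_mul_invSer (q : ℍ[ℝ]) :
    (1 - PowerSeries.C (R := ℍ[ℝ]) q * X ^ 2) * invSer q = 1 := by
  refine PowerSeries.ext fun n => ?_
  rw [sub_mul, one_mul, map_sub, mul_assoc, PowerSeries.coeff_C_mul,
    PowerSeries.coeff_X_pow_mul' (invSer q) 2 n]
  simp only [invSer, coeff_mk, PowerSeries.coeff_one]
  by_cases hd : 2 ∣ n
  · have hd0 := hd
    obtain ⟨k, hk⟩ := hd0
    rcases k with _ | k'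
    · simp [hk] at *
    · have h2 : (2:ℕ) ≤ n := by omega
      have hd' : 2 ∣ n - 2 := by omega
      rw [if_pos hd, if_pos h2, if_pos hd', if_neg (show n ≠ 0 by omega)]
      have e1 : n / 2 = k' + 1 := by omega
      have e2 : (n - 2) / 2 = k' := by omega
      rw [e1, e2, ← pow_succ']
      simp
  · have h3 : n ≠ 0 := by omega
    rw [if_neg hd, if_neg h3]
    by_cases h4 : (2:ℕ) ≤ n
    · have h2' : ¬ 2 ∣ n - 2 := by omega
      rw [if_pos h4, if_neg h2']; simp
    · rw [if_neg h4]; simp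

lemma invSer_mul_one_sub (q : ℍ[ℝ]) :
    invSer q * (1 - PowerSeries.C (R := ℍ[ℝ]) q * X ^ 2) = 1 := by
  refine PowerSeries.ext fun n => ?_
  rw [mul_sub, mul_one, map_sub, show invSer q * (PowerSeries.C (R := ℍ[ℝ]) q * X ^ 2)
      = invSer q * PowerSeries.C (R := ℍ[ℝ]) q * X ^ 2 by rw [mul_assoc],
    PowerSeries.coeff_mul_X_pow' _ 2 n, PowerSeries.coeff_mul_C]
  simp only [invSer, coeff_mk, PowerSeries.coeff_one]
  by_cases hd : 2 ∣ n
  · have hd0 := hd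
    obtain ⟨k, hk⟩ := hd0
    rcases k with _ | k'
    · simp [hk] at *
    · have h2 : (2:ℕ) ≤ n := by omega
      have hd' : 2 ∣ n - 2 := by omega
      rw [if_pos hd, if_pos h2, if_pos hd', if_neg (show n ≠ 0 by omega)]
      have e1 : n / 2 = k' + 1 := by omega
      have e2 : (n - 2) / 2 = k' := by omega
      rw [e1, e2, ← pow_succ]
      simp
  · have h3 : n ≠ 0 := by omega
    rw [if_neg hd, if_neg h3]
    by_cases h4 : (2:ℕ) ≤ n
    · have h2' : ¬ 2 ∣ n - 2 := by omega
      rw [if_pos h4, if_neg h2']; simp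
    · rw [if_neg h4]; simp

def unitOneSub (q : ℍ[ℝ]) : (PowerSeries ℍ[ℝ])ˣ :=
  ⟨1 - PowerSeries.C (R := ℍ[ℝ]) q * X ^ 2, invSer q, one_sub_mul_invSer q, invSer_mul_one_sub q⟩

lemma ringInverse_one_sub (q : ℍ[ℝ]) :
    Ring.inverse (1 - PowerSeries.C (R := ℍ[ℝ]) q * X ^ 2) = invSer q :=
  Ring.inverse_unit (unitOneSub q)

lemma C_mul_invSer (a b : ℍ[ℝ]) :
    PowerSeries.C (R := ℍ[ℝ]) a * invSer (b * a) = invSer (a * b) * PowerSeries.C (R := ℍ[ℝ]) a := by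
  refine PowerSeries.ext fun n => ?_
  rw [PowerSeries.coeff_C_mul, PowerSeries.coeff_mul_C]
  simp only [invSer, coeff_mk]
  split
  · exact (SemiconjBy.pow_right (by simp [SemiconjBy, mul_assoc]) (n / 2)).eq
  · simp
lemma qS_sub (x y : ℍ[ℝ]) : qS (x - y) = qS x - qS y := map_sub qSh x y
lemma qP_sub (x y : ℍ[ℝ]) : qP (x - y) = qP x - qP y := map_sub qPh x y

lemma coeff_pStar (α : PowerSeries ℍ[ℝ]) (n : ℕ) :
    PowerSeries.coeff n (pStar α) = star (PowerSeries.coeff n α) := coeff_mk _ _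

lemma coeff_one_sub_CX2 {R : Type*} [Ring R] (q : R) (n : ℕ) :
    PowerSeries.coeff n (1 - PowerSeries.C (R := R) q * X ^ 2) =
      (if n = 0 then 1 else 0) - (if n = 2 then q else 0) := by
  rw [map_sub, PowerSeries.coeff_one, PowerSeries.coeff_C_mul_X_pow]

lemma pS_one_sub (q : ℍ[ℝ]) :
    pS (1 - PowerSeries.C (R := ℍ[ℝ]) q * X ^ 2) = 1 - PowerSeries.C (R := ℂ) (qS q) * X ^ 2 := by
  refine PowerSeries.ext fun n => ?_
  rw [coeff_pS, coeff_one_sub_CX2, coeff_one_sub_CX2, qS_sub]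
  split_ifs <;> simp [qS_one, qS_zero]

lemma pP_one_sub (q : ℍ[ℝ]) :
    pP (1 - PowerSeries.C (R := ℍ[ℝ]) q * X ^ 2) = -(PowerSeries.C (R := ℂ) (qP q) * X ^ 2) := by
  refine PowerSeries.ext fun n => ?_
  rw [coeff_pP, coeff_one_sub_CX2, qP_sub, map_neg, PowerSeries.coeff_C_mul_X_pow]
  split_ifs <;> simp [qP_one, qP_zero]

lemma pStar_one_sub (q : ℍ[ℝ]) :
    pStar (1 - PowerSeries.C (R := ℍ[ℝ]) q * X ^ 2) = 1 - PowerSeries.C (R := ℍ[ℝ]) (star q) * X ^ 2 := by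
  refine PowerSeries.ext fun n => ?_
  rw [coeff_pStar, coeff_one_sub_CX2, coeff_one_sub_CX2]
  split_ifs <;> simp

lemma cq_apply (c : ℂ) : cq c = ⟨c.re, c.im, 0, 0⟩ := rfl

lemma hq1 (q : ℍ[ℝ]) : cq (qS q + (starRingEnd ℂ) (qS q)) = q + star q := by
  ext <;> simp [cq_apply, qS]
lemma hq2 (q : ℍ[ℝ]) :
    cq (qS q * (starRingEnd ℂ) (qS q) + qP q * (starRingEnd ℂ) (qP q)) = q * star q := by
  ext <;>
    simp [cq_apply, qS, qP, Complex.mul_re, Complex.mul_im, Quaternion.re_mul, Quaternion.imI_mul,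
      Quaternion.imJ_mul, Quaternion.imK_mul] <;> ring

lemma pConj_one_sub (z : ℂ) :
    pConj (1 - PowerSeries.C (R := ℂ) z * X ^ 2) = 1 - PowerSeries.C (R := ℂ) ((starRingEnd ℂ) z) * X ^ 2 := by
  unfold pConj
  rw [map_sub, map_one, map_mul, map_pow, PowerSeries.map_C, PowerSeries.map_X]

lemma pConj_neg_CX2 (z : ℂ) :
    pConj (-(PowerSeries.C (R := ℂ) z * X ^ 2)) = -(PowerSeries.C (R := ℂ) ((starRingEnd ℂ) z) * X ^ 2) := by
  unfold pConj
  rw [map_neg, map_mul, map_pow, PowerSeries.map_C, PowerSeries.map_X]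

lemma detPsi1_one_sub (q : ℍ[ℝ]) :
    detPsi1 (1 - PowerSeries.C (R := ℍ[ℝ]) q * X ^ 2) =
      1 - PowerSeries.C (R := ℂ) (qS q + (starRingEnd ℂ) (qS q)) * X ^ 2 +
        PowerSeries.C (R := ℂ) (qS q * (starRingEnd ℂ) (qS q) + qP q * (starRingEnd ℂ) (qP q)) * X ^ 4 := by
  rw [detPsi1, pS_one_sub, pP_one_sub, pConj_one_sub, pConj_neg_CX2, map_add, map_add,
    map_mul, map_mul]
  ring

lemma map_cq_detPsi1 (q : ℍ[ℝ]) :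
    PowerSeries.map cq (detPsi1 (1 - PowerSeries.C (R := ℍ[ℝ]) q * X ^ 2)) =
      (1 - PowerSeries.C (R := ℍ[ℝ]) q * X ^ 2) * pStar (1 - PowerSeries.C (R := ℍ[ℝ]) q * X ^ 2) := by
  rw [pStar_one_sub, detPsi1_one_sub, map_add, map_sub, map_one, map_mul, map_mul, map_pow,
    map_pow, PowerSeries.map_C, PowerSeries.map_C, PowerSeries.map_X, hq1, hq2]
  have hAB : (PowerSeries.C (R := ℍ[ℝ]) q * X ^ 2) * (PowerSeries.C (R := ℍ[ℝ]) (star q) * X ^ 2)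
      = PowerSeries.C (R := ℍ[ℝ]) (q * star q) * X ^ 4 := by
    rw [mul_assoc, ← mul_assoc (X ^ 2),
      ((PowerSeries.commute_X (PowerSeries.C (R := ℍ[ℝ]) (star q))).symm.pow_left 2).eq,
      mul_assoc, ← pow_add, ← mul_assoc, ← map_mul]
  rw [mul_sub, mul_one, sub_mul, one_mul, hAB, map_add, add_mul]
  abel
lemma CX_mul_CX (a b : ℍ[ℝ]) :
    (PowerSeries.C (R := ℍ[ℝ]) a * X) * (PowerSeries.C (R := ℍ[ℝ]) b * X)
      = PowerSeries.C (R := ℍ[ℝ]) (a * b) * X ^ 2 := by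
  rw [mul_assoc, ← mul_assoc X, (PowerSeries.commute_X (PowerSeries.C (R := ℍ[ℝ]) b)).symm.eq,
    mul_assoc, ← mul_assoc, ← map_mul, ← sq]

section GraphPart

variable {V : Type*} [Fintype V] [DecidableEq V] (G : SimpleGraph V) [DecidableRel G.Adj]
  (w : G.Dart → ℍ[ℝ])

def qq (e : G.Dart) : ℍ[ℝ] := w e * w e.symm

def Jmat : Matrix G.Dart G.Dart (PowerSeries ℍ[ℝ]) :=
  (Jw G w).map fun a => PowerSeries.C (R := ℍ[ℝ]) a * X
def Bmat : Matrix G.Dart G.Dart (PowerSeries ℍ[ℝ]) :=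
  (Bw G w).map fun a => PowerSeries.C (R := ℍ[ℝ]) a * X
def Fmat : Matrix G.Dart G.Dart (PowerSeries ℍ[ℝ]) :=
  Matrix.diagonal fun e => invSer (qq G w e)
def Nmat : Matrix G.Dart V (PowerSeries ℍ[ℝ]) :=
  fun e v => if e.snd = v then PowerSeries.C (R := ℍ[ℝ]) (w e) * X else 0
def Smat : Matrix V G.Dart (PowerSeries ℍ[ℝ]) :=
  fun v f => if f.fst = v then 1 else 0

lemma Jmat_apply (e f : G.Dart) :
    Jmat G w e f = if f = e.symm then PowerSeries.C (R := ℍ[ℝ]) (w e) * X else 0 := by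
  simp [Jmat, Jw, Matrix.map_apply, apply_ite (fun a => PowerSeries.C (R := ℍ[ℝ]) a * X)]

lemma Bmat_apply (e f : G.Dart) :
    Bmat G w e f = if e.snd = f.fst then PowerSeries.C (R := ℍ[ℝ]) (w e) * X else 0 := by
  simp [Bmat, Bw, Matrix.map_apply, apply_ite (fun a => PowerSeries.C (R := ℍ[ℝ]) a * X)]

lemma NS_eq_B : Nmat G w * Smat G = Bmat G w := by
  apply Matrix.ext; intro e f
  rw [Matrix.mul_apply]
  rw [Finset.sum_eq_single e.snd
    (fun v _ hv => by
      rw [show Nmat G w e v = 0 by simp [Nmat, Ne.symm hv], zero_mul])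
    (fun h => absurd (Finset.mem_univ _) h)]
  rw [show Nmat G w e e.snd = PowerSeries.C (R := ℍ[ℝ]) (w e) * X by simp [Nmat], Bmat_apply]
  by_cases hf : e.snd = f.fst
  · rw [show Smat G e.snd f = 1 by simp [Smat, hf.symm], mul_one, if_pos hf]
  · rw [show Smat G e.snd f = 0 by
        simp only [Smat]; rw [if_neg (fun h => hf (Eq.symm h))], mul_zero, if_neg hf]

lemma JJ_eq : Jmat G w * Jmat G w =
    Matrix.diagonal fun e => PowerSeries.C (R := ℍ[ℝ]) (qq G w e) * X ^ 2 := by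
  apply Matrix.ext; intro e f
  simp only [Matrix.mul_apply, Jmat_apply]
  rw [Finset.sum_eq_single e.symm (fun g _ hg => by rw [if_neg hg, zero_mul])
    (fun h => absurd (Finset.mem_univ _) h)]
  rw [if_pos rfl, SimpleGraph.Dart.symm_symm]
  by_cases h : f = e
  · subst h
    rw [if_pos rfl, Matrix.diagonal_apply_eq, CX_mul_CX]
    rfl
  · rw [if_neg h, mul_zero, Matrix.diagonal_apply_ne' _ h]

lemma JF_comm : Jmat G w * Fmat G w = Fmat G w * Jmat G w := by
  apply Matrix.ext; intro e f
  rw [show Fmat G w = Matrix.diagonal (fun e => invSer (qq G w e)) from rfl,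
    Matrix.mul_diagonal, Matrix.diagonal_mul, Jmat_apply]
  by_cases h : f = e.symm
  · subst h
    rw [if_pos rfl]
    have h1 : qq G w e.symm = w e.symm * w e := by rw [qq, SimpleGraph.Dart.symm_symm]
    rw [h1, mul_assoc, ← (PowerSeries.commute_X (invSer (w e.symm * w e))).eq, ← mul_assoc,
      C_mul_invSer (w e) (w e.symm), mul_assoc, qq]
  · rw [if_neg h, zero_mul, mul_zero]

lemma oneJ_mul_F_mul_oneJ :
    (1 + Jmat G w) * (Fmat G w * (1 - Jmat G w)) = 1 := by
  have h1 : (1 + Jmat G w) * Fmat G w = Fmat G w * (1 + Jmat G w) := by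
    rw [add_mul, one_mul, mul_add, mul_one, JF_comm]
  rw [← mul_assoc, h1, mul_assoc]
  have h2 : (1 + Jmat G w) * (1 - Jmat G w) = 1 - Jmat G w * Jmat G w := by
    noncomm_ring
  rw [h2, JJ_eq]
  have h3 : (1 : Matrix G.Dart G.Dart (PowerSeries ℍ[ℝ]))
      - Matrix.diagonal (fun e => PowerSeries.C (R := ℍ[ℝ]) (qq G w e) * X ^ 2)
      = Matrix.diagonal fun e => 1 - PowerSeries.C (R := ℍ[ℝ]) (qq G w e) * X ^ 2 := by
    rw [← Matrix.diagonal_one, Matrix.diagonal_sub]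
  rw [h3, Fmat, Matrix.diagonal_mul_diagonal]
  have h4 : (fun i => invSer (qq G w i) * (1 - PowerSeries.C (R := ℍ[ℝ]) (qq G w i) * X ^ 2))
      = fun _ : G.Dart => (1 : PowerSeries ℍ[ℝ]) := funext fun e => invSer_mul_one_sub _
  rw [h4, Matrix.diagonal_one]

lemma factorizationKMS :
    (1 : Matrix G.Dart G.Dart (PowerSeries ℍ[ℝ])) - Bmat G w + Jmat G w
      = (1 + Jmat G w) * (1 - Fmat G w * (1 - Jmat G w) * Nmat G w * Smat G) := by
  have h : (1 + Jmat G w) * (Fmat G w * (1 - Jmat G w) * Nmat G w * Smat G)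
      = ((1 + Jmat G w) * (Fmat G w * (1 - Jmat G w))) * (Nmat G w * Smat G) := by
    rw [Matrix.mul_assoc (Fmat G w * (1 - Jmat G w)) (Nmat G w) (Smat G)]
    exact (Matrix.mul_assoc _ _ _).symm
  rw [mul_sub, mul_one, h, oneJ_mul_F_mul_oneJ, one_mul, NS_eq_B]
  abel

lemma Fmat_eq : Fmat G w = Matrix.diagonal (fun e => invSer (qq G w e)) := rfl

lemma S_F_N : Smat G * (Fmat G w * Nmat G w) = (Wtil G w).map (fun a => a * X) := by
  apply Matrix.ext; intro u v
  rw [Matrix.mul_apply, Matrix.map_apply]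
  by_cases h : G.Adj u v
  · rw [Finset.sum_eq_single (⟨(u,v),h⟩ : G.Dart)
      (fun e _ he => by
        by_cases h1 : e.fst = u
        · by_cases h2 : e.snd = v
          · exact absurd (SimpleGraph.Dart.ext e ⟨(u,v),h⟩ (Prod.ext h1 h2)) he
          · rw [Fmat_eq, Matrix.diagonal_mul, show Nmat G w e v = 0 by simp [Nmat, h2],
              mul_zero, mul_zero]
        · rw [show Smat G u e = 0 by simp [Smat, h1], zero_mul])
      (fun hh => absurd (Finset.mem_univ _) hh)]
    rw [show Smat G u (⟨(u,v),h⟩ : G.Dart) = 1 by simp [Smat], one_mul,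
      Fmat_eq, Matrix.diagonal_mul,
      show Nmat G w (⟨(u,v),h⟩ : G.Dart) v = PowerSeries.C (R := ℍ[ℝ]) (w ⟨(u,v),h⟩) * X by
        simp [Nmat]]
    simp only [Wtil]
    rw [dif_pos h, ringInverse_one_sub]
    simp only [qq]
    exact (mul_assoc _ _ _).symm
  · rw [show Wtil G w u v = 0 by simp only [Wtil]; rw [dif_neg h], zero_mul]
    refine Finset.sum_eq_zero fun e _ => ?_
    by_cases h1 : e.fst = u
    · by_cases h2 : e.snd = v
      · have := e.adj; rw [h1, h2] at this; exact absurd this h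
      · rw [Fmat_eq, Matrix.diagonal_mul, show Nmat G w e v = 0 by simp [Nmat, h2],
          mul_zero, mul_zero]
    · rw [show Smat G u e = 0 by simp [Smat, h1], zero_mul]

lemma JN_apply (e : G.Dart) (v : V) :
    (Jmat G w * Nmat G w) e v
      = if e.fst = v then PowerSeries.C (R := ℍ[ℝ]) (qq G w e) * X ^ 2 else 0 := by
  rw [Matrix.mul_apply, Finset.sum_eq_single e.symm
    (fun g _ hg => by rw [Jmat_apply, if_neg hg, zero_mul])
    (fun hh => absurd (Finset.mem_univ _) hh), Jmat_apply, if_pos rfl]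
  by_cases h : e.fst = v
  · rw [show Nmat G w e.symm v = PowerSeries.C (R := ℍ[ℝ]) (w e.symm) * X by
      simp [Nmat, show e.symm.snd = e.fst from rfl, h], if_pos h, CX_mul_CX, qq]
  · rw [show Nmat G w e.symm v = 0 by
      simp [Nmat, show e.symm.snd = e.fst from rfl, h], mul_zero, if_neg h]

lemma S_F_JN : Smat G * (Fmat G w * (Jmat G w * Nmat G w))
    = (Dtil G w).map (fun a => a * X ^ 2) := by
  apply Matrix.ext; intro u v
  rw [Matrix.mul_apply, Matrix.map_apply]
  by_cases h : u = v
  · subst h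
    simp only [Dtil, eq_self_iff_true, if_true]
    rw [Finset.sum_mul, Finset.sum_filter]
    refine Finset.sum_congr rfl fun e _ => ?_
    rw [Fmat_eq, Matrix.diagonal_mul, JN_apply]
    by_cases hf : e.fst = u
    · rw [if_pos hf, if_pos hf, show Smat G u e = 1 by simp [Smat, hf], one_mul,
        ringInverse_one_sub]
      simp only [qq]
      exact (mul_assoc _ _ _).symm
    · rw [if_neg hf, if_neg hf, mul_zero, mul_zero]
  · rw [show Dtil G w u v = 0 by simp only [Dtil]; rw [if_neg h], zero_mul]
    refine Finset.sum_eq_zero fun e _ => ?_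
    by_cases h1 : e.fst = u
    · rw [Fmat_eq, Matrix.diagonal_mul, JN_apply, if_neg (by rw [h1]; exact h), mul_zero,
        mul_zero]
    · rw [show Smat G u e = 0 by simp [Smat, h1], zero_mul]

lemma mid_eq : (1 : Matrix V V (PowerSeries ℍ[ℝ]))
      - Smat G * (Fmat G w * (1 - Jmat G w) * Nmat G w)
    = 1 - (Wtil G w).map (fun a => a * X) + (Dtil G w).map (fun a => a * X ^ 2) := by
  have hM : Fmat G w * (1 - Jmat G w) * Nmat G w
      = Fmat G w * Nmat G w - Fmat G w * (Jmat G w * Nmat G w) := by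
    rw [mul_sub, mul_one, Matrix.sub_mul, Matrix.mul_assoc]
  rw [hM, Matrix.mul_sub, S_F_N, S_F_JN]
  abel

lemma oneJ_submatrix {m : ℕ} (q : Fin m ⊕ Fin m ≃ G.Dart)
    (hs1 : ∀ k : Fin m, q (Sum.inr k) = (q (Sum.inl k)).symm) :
    (1 + Jmat G w).submatrix q q
      = Matrix.fromBlocks 1
          (Matrix.diagonal fun i => PowerSeries.C (R := ℍ[ℝ]) (w (q (Sum.inl i))) * X)
          (Matrix.diagonal fun i => PowerSeries.C (R := ℍ[ℝ]) (w (q (Sum.inr i))) * X) 1 := by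
  have hs2 : ∀ k : Fin m, (q (Sum.inr k)).symm = q (Sum.inl k) := fun k => by
    rw [hs1 k, SimpleGraph.Dart.symm_symm]
  apply Matrix.ext; rintro (i|i) (j|j)
  · rw [Matrix.submatrix_apply, Matrix.add_apply, Jmat_apply, ← hs1 i,
      if_neg (fun hh => by simpa using q.injective hh), add_zero,
      Matrix.fromBlocks_apply₁₁]
    simp [Matrix.one_apply, q.injective.eq_iff]
  · rw [Matrix.submatrix_apply, Matrix.add_apply, Jmat_apply, Matrix.one_apply,
      if_neg (fun hh => by simpa using q.injective hh), zero_add, ← hs1 i,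
      Matrix.fromBlocks_apply₁₂]
    by_cases hij : i = j
    · subst hij; rw [if_pos rfl, Matrix.diagonal_apply_eq]
    · rw [if_neg (fun hh => hij (Sum.inr.inj (q.injective hh)).symm),
        Matrix.diagonal_apply_ne _ hij]
  · rw [Matrix.submatrix_apply, Matrix.add_apply, Jmat_apply, Matrix.one_apply,
      if_neg (fun hh => by simpa using q.injective hh), zero_add, hs2 i,
      Matrix.fromBlocks_apply₂₁]
    by_cases hij : i = j
    · subst hij; rw [if_pos rfl, Matrix.diagonal_apply_eq]
    · rw [if_neg (fun hh => hij (Sum.inl.inj (q.injective hh)).symm),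
        Matrix.diagonal_apply_ne _ hij]
  · rw [Matrix.submatrix_apply, Matrix.add_apply, Jmat_apply, hs2 i,
      if_neg (fun hh => by simpa using q.injective hh), add_zero,
      Matrix.fromBlocks_apply₂₂]
    simp [Matrix.one_apply, q.injective.eq_iff]

lemma SdetT_oneJ {m : ℕ} (q : Fin m ⊕ Fin m ≃ G.Dart)
    (hs1 : ∀ k : Fin m, q (Sum.inr k) = (q (Sum.inl k)).symm) :
    SdetT (1 + Jmat G w) = ∏ i : Fin m,
      detPsi1 (1 - PowerSeries.C (R := ℍ[ℝ]) (w (q (Sum.inl i)) * w (q (Sum.inr i))) * X ^ 2) := by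
  rw [← SdetT_submatrix q (1 + Jmat G w), oneJ_submatrix G w q hs1]
  set A := Matrix.diagonal fun i : Fin m => PowerSeries.C (R := ℍ[ℝ]) (w (q (Sum.inl i))) * X with hA
  set B := Matrix.diagonal fun i : Fin m => PowerSeries.C (R := ℍ[ℝ]) (w (q (Sum.inr i))) * X with hB
  have hfac : Matrix.fromBlocks (1 : Matrix (Fin m) (Fin m) (PowerSeries ℍ[ℝ])) A B 1
      = Matrix.fromBlocks (1 - A * B) A 0 1 * Matrix.fromBlocks 1 0 B 1 := by
    rw [Matrix.fromBlocks_multiply]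
    simp [sub_add_cancel]
  rw [hfac, SdetT_mul, SdetT_fromBlocks_zero₂₁, SdetT_fromBlocks_zero₁₂, SdetT_one, mul_one,
    mul_one, mul_one]
  have hAB : (1 : Matrix (Fin m) (Fin m) (PowerSeries ℍ[ℝ])) - A * B
      = Matrix.diagonal fun i =>
          1 - PowerSeries.C (R := ℍ[ℝ]) (w (q (Sum.inl i)) * w (q (Sum.inr i))) * X ^ 2 := by
    rw [hA, hB, Matrix.diagonal_mul_diagonal]
    apply Matrix.ext; intro i j
    by_cases hij : i = j
    · subst hij
      simp [Matrix.sub_apply, Matrix.one_apply_eq, CX_mul_CX]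
    · simp [Matrix.sub_apply, Matrix.one_apply_ne hij, Matrix.diagonal_apply_ne _ hij]
  rw [hAB, SdetT_diagonal]


end GraphPart

/-- the identity of Study determinants
`Sdet_t(I_{2m} − t(B_w − J_w)) = Sdet_t(I_n − tW̃ + t²D̃) · ∏_{i=1}^m (1 − w(e_i)w(e_i⁻¹)t²)(1 − w(e_i)w(e_i⁻¹)t²)^*`. -/
theorem Sdet_edgeMatrix_eq_Sdet_Bass
    {V : Type*} [Fintype V] [DecidableEq V] (G : SimpleGraph V) [DecidableRel G.Adj]
    (hG : G.Connected) (n m : ℕ) (hn : Fintype.card V = n) (hm : G.edgeFinset.card = m)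
    (ε : Fin (2 * m) ≃ G.Dart)
    (hsym : ∀ k : Fin m, ε ⟨m + k, by have := k.isLt; omega⟩ =
      (ε ⟨k, by have := k.isLt; omega⟩).symm)
    (w : G.Dart → ℍ[ℝ]) :
    PowerSeries.map cq
        (SdetT ((1 : Matrix G.Dart G.Dart (PowerSeries ℍ[ℝ])) -
          (Bw G w - Jw G w).map (fun a => (PowerSeries.C (R := ℍ[ℝ])) a * PowerSeries.X))) =
      PowerSeries.map cq
          (SdetT (1 - (Wtil G w).map (fun a => a * PowerSeries.X)
            + (Dtil G w).map (fun a => a * PowerSeries.X ^ 2))) *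
        (List.ofFn fun i : Fin m =>
          (1 - (PowerSeries.C (R := ℍ[ℝ]))
              (w (ε ⟨i, by have := i.isLt; omega⟩) *
                w ((ε ⟨i, by have := i.isLt; omega⟩).symm)) * PowerSeries.X ^ 2) *
            pStar (1 - (PowerSeries.C (R := ℍ[ℝ]))
              (w (ε ⟨i, by have := i.isLt; omega⟩) *
                w ((ε ⟨i, by have := i.isLt; omega⟩).symm)) * PowerSeries.X ^ 2)).prod := by
  
  set q : Fin m ⊕ Fin m ≃ G.Dart :=
    (finSumFinEquiv.trans (finCongr (two_mul m).symm)).trans ε with hq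
  have hql : ∀ i : Fin m, q (Sum.inl i) = ε ⟨i.val, by have := i.isLt; omega⟩ := by
    intro i
    simp only [hq, Equiv.trans_apply, finSumFinEquiv_apply_left]
    congr 1
  have hqr : ∀ i : Fin m, q (Sum.inr i) = ε ⟨m + i.val, by have := i.isLt; omega⟩ := by
    intro i
    simp only [hq, Equiv.trans_apply, finSumFinEquiv_apply_right]
    congr 1
  have hs1 : ∀ k : Fin m, q (Sum.inr k) = (q (Sum.inl k)).symm := fun k => by
    rw [hql, hqr]; exact hsym k
  have hBJ : (1 : Matrix G.Dart G.Dart (PowerSeries ℍ[ℝ])) -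
      (Bw G w - Jw G w).map (fun a => PowerSeries.C (R := ℍ[ℝ]) a * PowerSeries.X)
      = 1 - Bmat G w + Jmat G w := by
    have hmap : (Bw G w - Jw G w).map (fun a => PowerSeries.C (R := ℍ[ℝ]) a * PowerSeries.X)
        = Bmat G w - Jmat G w := by
      apply Matrix.ext; intro e f
      simp only [Matrix.map_apply, Matrix.sub_apply, Bmat, Jmat, map_sub, sub_mul]
    rw [hmap]; abel
  rw [hBJ, factorizationKMS, SdetT_mul, SdetT_one_sub_mul_comm, mid_eq,
    SdetT_oneJ G w q hs1, mul_comm, map_mul]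
  congr 1
  rw [← List.prod_ofFn, map_list_prod, List.map_ofFn]
  exact congrArg List.prod (congrArg List.ofFn (funext fun i => by
    show PowerSeries.map cq
        (detPsi1 (1 - PowerSeries.C (R := ℍ[ℝ]) (w (q (Sum.inl i)) * w (q (Sum.inr i))) * X ^ 2)) = _
    rw [map_cq_detPsi1, hql i, hqr i, hsym i]))


end
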